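/- For all real Y₁, Y₂, Z, the matrix identity X_{Y₂} · L · X_Z · F · X_Z · L · X_{Y₁} = X_{Ỹ₂} · L · X_{Ỹ₁} holds, where e^{Ỹ₁} = e^{Y₁}(1+e^{−2Z})⁻¹ and e^{Ỹ₂} = e^{Y₂}(1+e^{2Z}) (i.e. Ỹ₁ = Y₁ − log(1+e^{−2Z}), Ỹ₂ = Y₂ + log(1+e^{2Z})). -/

import Mathlib

open Matrix Real

noncomputable def Xm (Z : ℝ) : Matrix (Fin 2) (Fin 2) ℝ :=
  !![0, -Real.exp (Z / 2); Real.exp (-Z / 2), 0]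

def Fm : Matrix (Fin 2) (Fin 2) ℝ := !![0, 1; -1, 0]
def Lm : Matrix (Fin 2) (Fin 2) ℝ := !![0, 1; -1, -1]

/-! `X_Z F X_Z = X_{2Z}`, and shifting the parameter of `X` is multiplication by
the diagonal matrix `D_c = diag(e^{-c/2}, e^{c/2})` (on the right for `X_{Y+c}`, on the left for
`X_{Y-c}`). So the identity reduces to `L X_W L = D_a L D_{a-W}` for `W = 2Z` and
`e^a = 1 + e^W`, a `2 × 2` computation. -/

noncomputable def Dm (c : ℝ) : Matrix (Fin 2) (Fin 2) ℝ :=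
  !![Real.exp (-c / 2), 0; 0, Real.exp (c / 2)]

lemma Xm_mul_Fm_mul_Xm (Z : ℝ) : Xm Z * Fm * Xm Z = Xm (2 * Z) := by
  have h₁ : exp (Z / 2) * exp (Z / 2) = exp (2 * Z / 2) := by rw [← exp_add]; ring_nf
  have h₂ : exp (-Z / 2) * exp (-Z / 2) = exp (-(2 * Z) / 2) := by rw [← exp_add]; ring_nf
  ext i j
  fin_cases i <;> fin_cases j <;> simp [Xm, Fm, h₁, h₂]

lemma Xm_add (Y c : ℝ) : Xm (Y + c) = Xm Y * Dm c := by
  have h₁ : (Y + c) / 2 = Y / 2 + c / 2 := add_div Y c 2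
  have h₂ : -(Y + c) / 2 = -Y / 2 + -c / 2 := by ring
  rw [Xm, Xm, Dm, h₁, h₂, exp_add, exp_add]
  ext i j
  fin_cases i <;> fin_cases j <;> simp [mul_comm]

lemma Xm_sub (Y c : ℝ) : Xm (Y - c) = Dm c * Xm Y := by
  have h₁ : (Y - c) / 2 = -c / 2 + Y / 2 := by ring
  have h₂ : -(Y - c) / 2 = c / 2 + -Y / 2 := by ring
  rw [Xm, Xm, Dm, h₁, h₂, exp_add, exp_add]
  ext i j
  fin_cases i <;> fin_cases j <;> simp [mul_comm]

lemma log_one_add_exp_neg (t : ℝ) : log (1 + exp (-t)) = log (1 + exp t) - t := by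
  have h : 1 + exp (-t) = (1 + exp t) * exp (-t) := by
    rw [add_mul, one_mul, ← exp_add, add_neg_cancel, exp_zero, add_comm]
  rw [h, log_mul (by positivity) (exp_pos _).ne', log_exp, sub_eq_add_neg]

lemma Lm_mul_Xm_mul_Lm {W a : ℝ} (ha : exp a = 1 + exp W) :
    Lm * Xm W * Lm = Dm a * Lm * Dm (a - W) := by
  have h₁ : exp (-a / 2) * exp ((a - W) / 2) = exp (-W / 2) := by rw [← exp_add]; ring_nf
  have h₂ : exp (a / 2) * exp ((W - a) / 2) = exp (W / 2) := by rw [← exp_add]; ring_nf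
  have h₃ : exp (a / 2) * exp ((a - W) / 2) = exp (W / 2) + exp (-W / 2) := by
    calc exp (a / 2) * exp ((a - W) / 2) = exp a * exp (-W / 2) := by
          rw [← exp_add, ← exp_add]; ring_nf
      _ = exp (W / 2) + exp (-W / 2) := by
          rw [ha, add_mul, one_mul, add_comm, ← exp_add]; ring_nf
  ext i j
  fin_cases i <;> fin_cases j <;> simp [Lm, Xm, Dm, h₁, h₂, h₃]

theorem pending_flip_identity_1 (Y₁ Y₂ Z : ℝ) :
    Xm Y₂ * Lm * Xm Z * Fm * Xm Z * Lm * Xm Y₁ =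
      Xm (Y₂ + Real.log (1 + Real.exp (2 * Z))) * Lm *
        Xm (Y₁ - Real.log (1 + Real.exp (-2 * Z))) := by
  set a := log (1 + exp (2 * Z))
  have ha : exp a = 1 + exp (2 * Z) := exp_log (by positivity)
  have hb : log (1 + exp (-2 * Z)) = a - 2 * Z := by rw [neg_mul, log_one_add_exp_neg]
  calc Xm Y₂ * Lm * Xm Z * Fm * Xm Z * Lm * Xm Y₁
      = Xm Y₂ * (Lm * (Xm Z * Fm * Xm Z) * Lm) * Xm Y₁ := by simp only [Matrix.mul_assoc]
    _ = Xm Y₂ * (Dm a * Lm * Dm (a - 2 * Z)) * Xm Y₁ := by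
        rw [Xm_mul_Fm_mul_Xm, Lm_mul_Xm_mul_Lm ha]
    _ = Xm (Y₂ + a) * Lm * Xm (Y₁ - log (1 + exp (-2 * Z))) := by
        rw [hb, Xm_add, Xm_sub]; simp only [Matrix.mul_assoc]
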